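/- Let p < q be primes and 0 ≤ i ≤ φ(pq) - 1. Writing b_i for the i-th coefficient of (Φ_{pq}(x) - 1)/(x - 1), exactly one of b_i and b_{φ(pq)-1-i} is 0 and the other is 1; equivalently, b_i + b_{φ(pq)-1-i} = 1. -/

import Mathlib

open Polynomial

/-!
`Φ = Φ_{pq}` is palindromic of degree `n = φ(pq)` (as is every `Φ_m` with `m > 1`, by
induction through `X ^ m - 1 = ∏_{d ∣ m} Φ_d`), and `Φ(1) = 1` because `pq` is not a prime
power. Reflecting `(X - 1) f = Φ - 1`, where `f = (Φ - 1) / (X - 1)`, gives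
`(X - 1) X^(n-1) f(1/X) = X ^ n - Φ`, so `f + X^(n-1) f(1/X) = (X ^ n - 1) / (X - 1)`,
which is `1 + X + ⋯ + X^(n-1)`; compare coefficients.
-/

namespace Polynomial

variable {R : Type*}

theorem reverse_prod [CommSemiring R] [NoZeroDivisors R] {ι : Type*} (s : Finset ι)
    (f : ι → R[X]) : (∏ i ∈ s, f i).reverse = ∏ i ∈ s, (f i).reverse := by
  induction s using Finset.cons_induction with
  | empty => simp [reverse]
  | cons i s _ ih => rw [Finset.prod_cons, Finset.prod_cons, reverse_mul_of_domain, ih]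

theorem reverse_X_pow_sub_one [Ring R] [Nontrivial R] (n : ℕ) :
    (X ^ n - 1 : R[X]).reverse = 1 - X ^ n := by
  rw [reverse, ← C_1, natDegree_X_pow_sub_C, reflect_sub, reflect_C, reflect_monomial,
    revAt_le le_rfl, Nat.sub_self]
  simp

theorem reverse_cyclotomic [CommRing R] [IsDomain R] {n : ℕ} (hn : 1 < n) :
    (cyclotomic n R).reverse = cyclotomic n R := by
  induction n using Nat.strong_induction_on with | _ n ih
  have hn0 : n ≠ 0 := by omega
  set P := ∏ d ∈ n.properDivisors, cyclotomic d R with hP_def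
  have hP : P * cyclotomic n R = X ^ n - 1 := by
    rw [← prod_cyclotomic_eq_X_pow_sub_one (Nat.pos_of_ne_zero hn0) R,
      ← Nat.cons_self_properDivisors hn0, Finset.prod_cons, mul_comm]
  have hP_rev : P.reverse = -P := by
    have h1 := Nat.one_mem_properDivisors_iff_one_lt.2 hn
    have hX : (X - 1 : R[X]).reverse = -(X - 1) := by
      simpa using reverse_X_pow_sub_one (R := R) 1
    rw [hP_def, reverse_prod, ← Finset.mul_prod_erase _ _ h1,
      ← Finset.mul_prod_erase n.properDivisors (fun d => cyclotomic d R) h1, cyclotomic_one, hX,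
      neg_mul]
    congr 2
    refine Finset.prod_congr rfl fun d hd => ih d ?_ ?_
    · exact (Nat.mem_properDivisors.1 (Finset.mem_of_mem_erase hd)).2
    · have := Nat.pos_of_mem_properDivisors (Finset.mem_of_mem_erase hd)
      have := Finset.ne_of_mem_erase hd
      omega
  have hP0 : P ≠ 0 := (monic_prod_of_monic _ _ fun d _ => cyclotomic.monic d R).ne_zero
  have h := congrArg reverse hP
  rw [reverse_mul_of_domain, hP_rev, reverse_X_pow_sub_one, ← neg_sub, ← hP, neg_mul] at h
  exact mul_left_cancel₀ hP0 (neg_injective h)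

theorem eval_one_cyclotomic_prime_mul_prime [Ring R] {p q : ℕ} (hp : p.Prime) (hq : q.Prime)
    (hpq : p ≠ q) : eval 1 (cyclotomic (p * q) R) = 1 :=
  eval_one_cyclotomic_not_prime_pow fun hr _ hk =>
    have hp_eq := (Nat.prime_dvd_prime_iff_eq hp hr).1
      (hp.dvd_of_dvd_pow (hk ▸ dvd_mul_right p q))
    have hq_eq := (Nat.prime_dvd_prime_iff_eq hq hr).1
      (hq.dvd_of_dvd_pow (hk ▸ dvd_mul_left q p))
    hpq (hp_eq.trans hq_eq.symm)

theorem divByMonic_X_sub_one_add_reflect [CommRing R] {Φ : R[X]} {n : ℕ} (hn : 0 < n)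
    (hdeg : Φ.natDegree ≤ n) (hpal : reflect n Φ = Φ) (h1 : Φ.eval 1 = 1) :
    (Φ - 1) /ₘ (X - C 1) + reflect (n - 1) ((Φ - 1) /ₘ (X - C 1)) =
      ∑ k ∈ Finset.range n, X ^ k := by
  nontriviality R
  set f := (Φ - 1) /ₘ (X - C 1)
  have hf : (X - C 1) * f = Φ - 1 := mul_divByMonic_eq_iff_isRoot.2 (by simp [h1])
  have hf_deg : f.natDegree ≤ n - 1 := by
    rw [natDegree_divByMonic _ (monic_X_sub_C 1), natDegree_X_sub_C]
    exact Nat.sub_le_sub_right ((natDegree_sub_le _ _).trans (by simpa using hdeg)) 1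
  have hf_rev : (X - C 1) * reflect (n - 1) f = X ^ n - Φ := by
    have h := congrArg (reflect n) hf
    rw [← Nat.add_sub_of_le hn, reflect_mul _ _ (natDegree_X_sub_C_le 1) hf_deg,
      Nat.add_sub_of_le hn, reflect_sub, reflect_sub, hpal, reflect_one, reflect_C, reflect_one_X,
      map_one] at h
    rw [map_one]
    linear_combination -h
  apply (monic_X_sub_C (1 : R)).isRegular.left
  dsimp only
  rw [mul_add, hf, hf_rev, map_one, mul_comm, geom_sum_mul]
  ring

theorem coeff_divByMonic_X_sub_one_add_coeff [CommRing R] {Φ : R[X]} {n : ℕ} (hn : 0 < n)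
    (hdeg : Φ.natDegree ≤ n) (hpal : reflect n Φ = Φ) (h1 : Φ.eval 1 = 1) {i : ℕ}
    (hi : i ≤ n - 1) :
    ((Φ - 1) /ₘ (X - C 1)).coeff i + ((Φ - 1) /ₘ (X - C 1)).coeff (n - 1 - i) = 1 := by
  have h := congrArg (coeff · i) (divByMonic_X_sub_one_add_reflect hn hdeg hpal h1)
  simpa [coeff_reflect, revAt_le hi, finsetSum_coeff, coeff_X_pow, show i < n by omega] using h

end Polynomial

theorem coeff_add_reversed_coeff (p q : ℕ) (hp : p.Prime) (hq : q.Prime)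
    (hpq : p < q) (i : ℕ) (hi : i ≤ Nat.totient (p * q) - 1) :
    ((cyclotomic (p * q) ℤ - 1) /ₘ (X - C 1)).coeff i +
      ((cyclotomic (p * q) ℤ - 1) /ₘ (X - C 1)).coeff (Nat.totient (p * q) - 1 - i)
      = 1 := by
  have hpq_pos : 0 < p * q := Nat.mul_pos hp.pos hq.pos
  refine coeff_divByMonic_X_sub_one_add_coeff (Nat.totient_pos.2 hpq_pos)
    (natDegree_cyclotomic _ _).le ?_ (eval_one_cyclotomic_prime_mul_prime hp hq hpq.ne) hi
  rw [← natDegree_cyclotomic (p * q) ℤ]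
  exact reverse_cyclotomic (hp.one_lt.trans_le (Nat.le_mul_of_pos_right p hq.pos))
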